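/- (Lemma: recursion for the tracking error ℰ) Under the lower-bound, mixing, smoothness, and bounded-variance assumptions, for every round r ≥ 0 the Momentum Tracking iterates satisfy ℰ^{(r+1)} ≤ (1 − p/2) ℰ^{(r)} + (18β²/p) 𝒟^{(r)} + (24/(Np)) E‖U^{(r+1)} − D^{(r+1)}‖_F² + (144L⁴/p)η² Ξ^{(r)} + (72β²L²/p)η² E‖ū^{(r)}‖² + (144L²/p)η² E‖∇f(x̄^{(r)})‖² + 36L²σ²η²/(Np). -/

import Mathlib

open MeasureTheory
open scoped BigOperators

noncomputable section

/-- Problem data and standing assumptions (lower bound, mixing, smoothness) for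
decentralized optimization over `N` nodes in `ℝ^d`. -/
structure MTProblem (N d : ℕ) (Ω : Type) [mΩ : MeasurableSpace Ω] where
  /-- Probability measure driving the stochastic gradients. -/
  μ : Measure Ω
  prob : IsProbabilityMeasure μ
  fstar : ℝ
  L : ℝ
  σ : ℝ
  p : ℝ
  β : ℝ
  /-- Local objectives `f_i`. -/
  f : Fin N → EuclideanSpace ℝ (Fin d) → ℝ
  /-- Local gradients `∇f_i`. -/
  g : Fin N → EuclideanSpace ℝ (Fin d) → EuclideanSpace ℝ (Fin d)
  /-- Mixing matrix. -/
  W : Fin N → Fin N → ℝ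
  /-- Common initial parameter. -/
  x0 : EuclideanSpace ℝ (Fin d)
  hN : 0 < N
  hβ0 : 0 ≤ β
  hβ1 : β < 1
  hL : 0 < L
  hp0 : 0 < p
  hp1 : p ≤ 1
  hgrad : ∀ i v, HasGradientAt (f i) (g i v) v
  /-- Lower bound: `f⋆ ≤ f(x)` for all `x`. -/
  hlb : ∀ v, fstar ≤ (N : ℝ)⁻¹ * ∑ i, f i v
  /-- `L`-smoothness of each `f_i`. -/
  hsmooth : ∀ i v w, ‖g i v - g i w‖ ≤ L * ‖v - w‖
  hWsymm : ∀ i j, W i j = W j i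
  hWrow : ∀ i, ∑ j, W i j = 1
  hWcol : ∀ j, ∑ i, W i j = 1
  /-- Spectral gap: `‖XW − X̄‖_F² ≤ (1−p)‖X − X̄‖_F²`. -/
  hmix : ∀ X : Fin N → EuclideanSpace ℝ (Fin d),
    ∑ j, ‖(∑ i, W i j • X i) - (N : ℝ)⁻¹ • ∑ i, X i‖ ^ 2
      ≤ (1 - p) * ∑ j, ‖X j - (N : ℝ)⁻¹ • ∑ i, X i‖ ^ 2

namespace MTProblem

variable {N d : ℕ} {Ω : Type} [mΩ : MeasurableSpace Ω]

/-- Global objective `f = (1/N) ∑_i f_i`. -/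
def F (P : MTProblem N d Ω) (v : EuclideanSpace ℝ (Fin d)) : ℝ :=
  (N : ℝ)⁻¹ * ∑ i, P.f i v

/-- Gradient of the global objective, `∇f = (1/N) ∑_i ∇f_i`. -/
def gradF (P : MTProblem N d Ω) (v : EuclideanSpace ℝ (Fin d)) : EuclideanSpace ℝ (Fin d) :=
  (N : ℝ)⁻¹ • ∑ i, P.g i v

end MTProblem

/-- A run of the Momentum Tracking algorithm: trajectories `x, u, c`, realized
stochastic gradients `G r i = ∇F_i(x_i^{(r)}; ξ_i^{(r)})`, together with the update
rules, the standard initialization, and the stochastic-gradient assumptions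
(unbiasedness, bounded variance, independence across nodes and rounds in the form
of orthogonality of the noises). -/
structure MTRun {N d : ℕ} {Ω : Type} [mΩ : MeasurableSpace Ω] (P : MTProblem N d Ω) where
  /-- Step size. -/
  η : ℝ
  hη : 0 < η
  x : ℕ → Fin N → Ω → EuclideanSpace ℝ (Fin d)
  u : ℕ → Fin N → Ω → EuclideanSpace ℝ (Fin d)
  c : ℕ → Fin N → Ω → EuclideanSpace ℝ (Fin d)
  G : ℕ → Fin N → Ω → EuclideanSpace ℝ (Fin d)
  /-- Filtration of the information available at each round. -/
  ℱ : MeasureTheory.Filtration ℕ mΩ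
  hx0 : ∀ i, x 0 i = fun _ => P.x0
  hu0 : ∀ i ω, u 0 i ω = (1 - P.β)⁻¹ • (G 0 i ω - (N : ℝ)⁻¹ • ∑ j, G 0 j ω)
  hc0 : ∀ i, c 0 i = u 0 i
  hu : ∀ r i ω, u (r + 1) i ω = P.β • u r i ω + G r i ω
  hx : ∀ r i ω, x (r + 1) i ω
      = (∑ j, P.W i j • x r j ω) - η • (u (r + 1) i ω - c r i ω)
  hc : ∀ r i ω, c (r + 1) i ω
      = (∑ j, P.W i j • (c r j ω - u (r + 1) j ω)) + u (r + 1) i ω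
  hmeas : ∀ r i, MemLp (G r i) 2 P.μ
  hadapted_x : ∀ r i, StronglyMeasurable[ℱ r] (x r i)
  hadapted_G : ∀ r i, StronglyMeasurable[ℱ (r + 1)] (G r i)
  /-- Unbiasedness: `E[∇F_i(x_i^{(r)};ξ) | ℱ_r] = ∇f_i(x_i^{(r)})`. -/
  hunbiased : ∀ r i,
    MeasureTheory.condExp (ℱ r) P.μ (G r i) =ᵐ[P.μ] fun ω => P.g i (x r i ω)
  /-- Bounded variance. -/
  hvar : ∀ r i, ∫ ω, ‖G r i ω - P.g i (x r i ω)‖ ^ 2 ∂P.μ ≤ P.σ ^ 2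
  /-- Independence across nodes and rounds (orthogonality of the noises). -/
  horth : ∀ r s : ℕ, ∀ i j : Fin N, (r, i) ≠ (s, j) →
    ∫ ω, (inner ℝ (G r i ω - P.g i (x r i ω)) (G s j ω - P.g j (x s j ω)) : ℝ) ∂P.μ = 0

namespace MTRun

variable {N d : ℕ} {Ω : Type} [mΩ : MeasurableSpace Ω] {P : MTProblem N d Ω}

/-- Node-average of the parameters, `x̄^{(r)}`. -/
def xbar (S : MTRun P) (r : ℕ) (ω : Ω) : EuclideanSpace ℝ (Fin d) :=
  (N : ℝ)⁻¹ • ∑ i, S.x r i ω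

/-- Node-average of the momenta, `ū^{(r)}`. -/
def ubar (S : MTRun P) (r : ℕ) (ω : Ω) : EuclideanSpace ℝ (Fin d) :=
  (N : ℝ)⁻¹ • ∑ i, S.u r i ω

/-- Node-average of the correction variables, `c̄^{(r)}`. -/
def cbar (S : MTRun P) (r : ℕ) (ω : Ω) : EuclideanSpace ℝ (Fin d) :=
  (N : ℝ)⁻¹ • ∑ i, S.c r i ω

/-- Auxiliary average `z̄^{(r)}`. -/
def zbar (S : MTRun P) : ℕ → Ω → EuclideanSpace ℝ (Fin d)
  | 0 => S.xbar 0
  | r + 1 => fun ω =>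
      (1 - P.β)⁻¹ • S.xbar (r + 1) ω - (P.β * (1 - P.β)⁻¹) • S.xbar r ω

/-- Auxiliary sequence `d_i^{(r)}`. -/
def dseq (S : MTRun P) : ℕ → Fin N → Ω → EuclideanSpace ℝ (Fin d)
  | 0 => fun i ω => (1 - P.β)⁻¹ • (P.g i (S.xbar 0 ω) - P.gradF (S.xbar 0 ω))
  | r + 1 => fun i ω => P.β • dseq S r i ω + P.g i (S.xbar r ω)

/-- Auxiliary sequence `e_i^{(r)}`. -/
def eseq (S : MTRun P) : ℕ → Fin N → Ω → EuclideanSpace ℝ (Fin d)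
  | 0 => fun _ _ => 0
  | r + 1 => fun i ω => P.β • eseq S r i ω + P.gradF (S.xbar r ω)

/-- Node-average `d̄^{(r)}`. -/
def dbar (S : MTRun P) (r : ℕ) (ω : Ω) : EuclideanSpace ℝ (Fin d) :=
  (N : ℝ)⁻¹ • ∑ i, S.dseq r i ω

/-- Node-average `ē^{(r)}`. -/
def ebar (S : MTRun P) (r : ℕ) (ω : Ω) : EuclideanSpace ℝ (Fin d) :=
  (N : ℝ)⁻¹ • ∑ i, S.eseq r i ω

/-- Consensus distance `Ξ^{(r)} = (1/N) E‖X^{(r)} − X̄^{(r)}‖_F²`. -/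
def Xi (S : MTRun P) (r : ℕ) : ℝ :=
  (N : ℝ)⁻¹ * ∫ ω, (∑ i, ‖S.x r i ω - S.xbar r ω‖ ^ 2) ∂P.μ

/-- Tracking error `ℰ^{(r)} = (1/N) E‖D^{(r+1)} − C^{(r)} − E^{(r+1)}‖_F²`. -/
def EE (S : MTRun P) (r : ℕ) : ℝ :=
  (N : ℝ)⁻¹ *
    ∫ ω, (∑ i, ‖S.dseq (r + 1) i ω - S.c r i ω - S.eseq (r + 1) i ω‖ ^ 2) ∂P.μ

/-- Momentum drift `𝒟^{(r)} = (1/N) E‖D^{(r+1)} − D^{(r)} − E^{(r+1)} + E^{(r)}‖_F²`. -/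
def DD (S : MTRun P) (r : ℕ) : ℝ :=
  (N : ℝ)⁻¹ *
    ∫ ω, (∑ i,
      ‖S.dseq (r + 1) i ω - S.dseq r i ω - S.eseq (r + 1) i ω + S.eseq r i ω‖ ^ 2) ∂P.μ

end MTRun

/-!
Write `A = D^{(r+1)} − C^{(r)} − E^{(r+1)}`; its columns sum to zero because `C` and `D − E` do.
One round of the algorithm gives `A⁺ = A W + Δ − S (I − W)`, where `S = U^{(r+1)} − D^{(r+1)}` and
`Δ` is the next momentum drift. Young's inequality with weight `p/2` and the spectral gap contract
the first term by `1 − p/2` at the price of a factor `3/p` on the rest, and `‖I − W‖ ≤ 2`.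
The drift `Δ` is `β` times the previous drift plus differences of gradients at `x̄^{(r+1)}` and
`x̄^{(r)}`, which smoothness bounds by `L² ‖x̄^{(r+1)} − x̄^{(r)}‖² = L² η² ‖ū^{(r+1)}‖²`.
Finally `ū^{(r+1)}` is an `ℱ_r`-measurable part plus the averaged gradient noise, which is
conditionally centred and, the noises being orthogonal, has second moment at most `σ²/N`.
-/

open Finset
open scoped InnerProductSpace

section NormSq

variable {E : Type*}

theorem norm_add_sq_le_young [SeminormedAddCommGroup E] (a b : E) {α : ℝ} (hα : 0 < α) :
    ‖a + b‖ ^ 2 ≤ (1 + α) * ‖a‖ ^ 2 + (1 + α⁻¹) * ‖b‖ ^ 2 := by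
  have hab : 2 * ‖a‖ * ‖b‖ ≤ α * ‖a‖ ^ 2 + α⁻¹ * ‖b‖ ^ 2 := by
    have h : α * ‖a‖ ^ 2 + α⁻¹ * ‖b‖ ^ 2 - 2 * ‖a‖ * ‖b‖ = (α * ‖a‖ - ‖b‖) ^ 2 / α := by
      field_simp; ring
    linarith [div_nonneg (sq_nonneg (α * ‖a‖ - ‖b‖)) hα.le]
  nlinarith [norm_add_le a b, norm_nonneg (a + b)]

theorem norm_add_sq_le_two_mul [SeminormedAddCommGroup E] (a b : E) :
    ‖a + b‖ ^ 2 ≤ 2 * ‖a‖ ^ 2 + 2 * ‖b‖ ^ 2 := by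
  simpa [one_add_one_eq_two] using norm_add_sq_le_young a b one_pos

theorem norm_add₃_sq_le [SeminormedAddCommGroup E] (a b c : E) :
    ‖a + b + c‖ ^ 2 ≤ 3 * ‖a‖ ^ 2 + 3 * ‖b‖ ^ 2 + 3 * ‖c‖ ^ 2 := by
  have h := pow_le_pow_left₀ (norm_nonneg _) (norm_add₃_le (a := a) (b := b) (c := c)) 2
  nlinarith [sq_nonneg (‖a‖ - ‖b‖), sq_nonneg (‖a‖ - ‖c‖), sq_nonneg (‖b‖ - ‖c‖)]

theorem sum_norm_add_sq_le_young [SeminormedAddCommGroup E] {ι : Type*} (s : Finset ι)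
    (a b : ι → E) {α : ℝ} (hα : 0 < α) :
    ∑ i ∈ s, ‖a i + b i‖ ^ 2
      ≤ (1 + α) * ∑ i ∈ s, ‖a i‖ ^ 2 + (1 + α⁻¹) * ∑ i ∈ s, ‖b i‖ ^ 2 := by
  rw [mul_sum, mul_sum, ← sum_add_distrib]
  exact sum_le_sum fun i _ => norm_add_sq_le_young (a i) (b i) hα

theorem sum_norm_add_sq_le_two_mul [SeminormedAddCommGroup E] {ι : Type*} (s : Finset ι)
    (a b : ι → E) :
    ∑ i ∈ s, ‖a i + b i‖ ^ 2 ≤ 2 * ∑ i ∈ s, ‖a i‖ ^ 2 + 2 * ∑ i ∈ s, ‖b i‖ ^ 2 := by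
  simpa [one_add_one_eq_two] using sum_norm_add_sq_le_young s a b one_pos

theorem sum_const_inv_card_smul [AddCommGroup E] [Module ℝ E] {n : ℕ} (hn : n ≠ 0) (v : E) :
    ∑ _i : Fin n, (n : ℝ)⁻¹ • v = v := by
  rw [sum_const, card_univ, Fintype.card_fin, ← Nat.cast_smul_eq_nsmul ℝ,
    smul_inv_smul₀ (Nat.cast_ne_zero.2 hn)]

theorem norm_avg_sq_le [SeminormedAddCommGroup E] [NormedSpace ℝ E] {n : ℕ} (v : Fin n → E) :
    ‖(n : ℝ)⁻¹ • ∑ i, v i‖ ^ 2 ≤ (n : ℝ)⁻¹ * ∑ i, ‖v i‖ ^ 2 := by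
  have hsum : ‖∑ i, v i‖ ^ 2 ≤ n * ∑ i, ‖v i‖ ^ 2 := by
    simpa using (pow_le_pow_left₀ (norm_nonneg _) (norm_sum_le univ v) 2).trans
      sq_sum_le_card_mul_sum_sq
  rw [norm_smul, mul_pow, norm_inv, Real.norm_natCast]
  calc ((n : ℝ)⁻¹) ^ 2 * ‖∑ i, v i‖ ^ 2 ≤ ((n : ℝ)⁻¹) ^ 2 * (n * ∑ i, ‖v i‖ ^ 2) := by gcongr
    _ = (n : ℝ)⁻¹ * ∑ i, ‖v i‖ ^ 2 := by
      rcases eq_or_ne (n : ℝ) 0 with hn | hn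
      · simp [hn]
      · field_simp

theorem sum_norm_sub_avg_sq_le [SeminormedAddCommGroup E] [InnerProductSpace ℝ E] {n : ℕ}
    (v : Fin n → E) :
    ∑ i, ‖v i - (n : ℝ)⁻¹ • ∑ j, v j‖ ^ 2 ≤ ∑ i, ‖v i‖ ^ 2 := by
  set s := ∑ j, v j
  have hexp : ∑ i, ‖v i - (n : ℝ)⁻¹ • s‖ ^ 2
      = ∑ i, ‖v i‖ ^ 2 - 2 * (n : ℝ)⁻¹ * ‖s‖ ^ 2 + n * ((n : ℝ)⁻¹) ^ 2 * ‖s‖ ^ 2 := by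
    simp_rw [norm_sub_sq_real, real_inner_smul_right, norm_smul, norm_inv, Real.norm_natCast]
    rw [sum_add_distrib, sum_sub_distrib, ← mul_sum, ← mul_sum, ← sum_inner,
      real_inner_self_eq_norm_sq]
    simp only [sum_const, card_univ, Fintype.card_fin, nsmul_eq_mul, inv_pow]
    ring
  rw [hexp]
  rcases eq_or_ne (n : ℝ) 0 with hn | hn
  · simp [hn]
  · have : n * ((n : ℝ)⁻¹) ^ 2 = (n : ℝ)⁻¹ := by field_simp
    rw [this]
    nlinarith [inv_nonneg.2 (Nat.cast_nonneg (α := ℝ) n), sq_nonneg ‖s‖]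

end NormSq

section L2

variable {Ω : Type*} {m mΩ : MeasurableSpace Ω} {μ : Measure Ω}

theorem MeasureTheory.MemLp.integrable_norm_sq {F : Type*} [NormedAddCommGroup F] {f : Ω → F}
    (hf : MemLp f 2 μ) : Integrable (fun ω => ‖f ω‖ ^ 2) μ :=
  hf.norm.integrable_sq

theorem LipschitzWith.memLp_comp [IsFiniteMeasure μ] {E F : Type*} [NormedAddCommGroup E]
    [NormedAddCommGroup F] {K : NNReal} {g : E → F} (hg : LipschitzWith K g) {p : ENNReal}
    {f : Ω → E} (hf : MemLp f p μ) : MemLp (fun ω => g (f ω)) p μ := by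
  have h0 : MemLp (fun ω => g (f ω) - g 0) p μ :=
    (hg.sub (LipschitzWith.const (g 0))).comp_memLp (sub_self _) hf
  convert h0.add (memLp_const (g 0)) using 1
  ext ω
  simp

variable {E : Type*} [NormedAddCommGroup E] [InnerProductSpace ℝ E]

theorem MeasureTheory.MemLp.integrable_inner {f g : Ω → E} (hf : MemLp f 2 μ)
    (hg : MemLp g 2 μ) : Integrable (fun ω => ⟪f ω, g ω⟫_ℝ) μ :=
  memLp_one_iff_integrable.1 ((innerSL ℝ).memLp_of_bilin 1 hf hg)

theorem integral_inner_eq_zero_of_condExp_eq_zero [CompleteSpace E] [IsFiniteMeasure μ]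
    (hm : m ≤ mΩ) {Y Z : Ω → E} (hY : StronglyMeasurable[m] Y)
    (hYZ : Integrable (fun ω => ⟪Y ω, Z ω⟫_ℝ) μ) (hZ : Integrable Z μ) (hZ0 : μ[Z|m] =ᵐ[μ] 0) :
    ∫ ω, ⟪Y ω, Z ω⟫_ℝ ∂μ = 0 := by
  rw [← integral_condExp hm]
  refine (integral_congr_ae ?_).trans (integral_zero Ω ℝ)
  filter_upwards [condExp_bilin_of_stronglyMeasurable_left (innerSL ℝ) hY hYZ hZ, hZ0]
    with ω hpull hω
  exact hpull.trans (by simp [hω])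

theorem integral_norm_add_sq_of_condExp_eq_zero [CompleteSpace E] [IsFiniteMeasure μ]
    (hm : m ≤ mΩ) {Y Z : Ω → E} (hY : StronglyMeasurable[m] Y) (hY2 : MemLp Y 2 μ)
    (hZ2 : MemLp Z 2 μ) (hZ0 : μ[Z|m] =ᵐ[μ] 0) :
    ∫ ω, ‖Y ω + Z ω‖ ^ 2 ∂μ = ∫ ω, ‖Y ω‖ ^ 2 ∂μ + ∫ ω, ‖Z ω‖ ^ 2 ∂μ := by
  have hYZ := hY2.integrable_inner hZ2
  have hcross := integral_inner_eq_zero_of_condExp_eq_zero hm hY hYZ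
    (hZ2.integrable one_le_two) hZ0
  have hY2' := hY2.integrable_norm_sq
  have hZ2' := hZ2.integrable_norm_sq
  simp_rw [norm_add_sq_real]
  simp (disch := fun_prop) only [integral_add, integral_const_mul, hcross, mul_zero, add_zero]

theorem integral_norm_sum_sq_of_orthogonal {ι : Type*} (s : Finset ι) {X : ι → Ω → E}
    (hX : ∀ i ∈ s, MemLp (X i) 2 μ)
    (horth : ∀ i ∈ s, ∀ j ∈ s, i ≠ j → ∫ ω, ⟪X i ω, X j ω⟫_ℝ ∂μ = 0) :
    ∫ ω, ‖∑ i ∈ s, X i ω‖ ^ 2 ∂μ = ∑ i ∈ s, ∫ ω, ‖X i ω‖ ^ 2 ∂μ := by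
  have hint : ∀ i ∈ s, ∀ j ∈ s, Integrable (fun ω => ⟪X i ω, X j ω⟫_ℝ) μ :=
    fun i hi j hj => (hX i hi).integrable_inner (hX j hj)
  simp_rw [← real_inner_self_eq_norm_sq, sum_inner, inner_sum]
  rw [integral_finsetSum _ fun i hi => integrable_finsetSum _ fun j hj => hint i hi j hj]
  refine sum_congr rfl fun i hi => ?_
  rw [integral_finsetSum _ fun j hj => hint i hi j hj]
  exact sum_eq_single_of_mem i hi fun j hj hji => horth i hi j hj hji.symm

end L2

instance MTProblem.instIsProbabilityMeasure {N d : ℕ} {Ω : Type} [MeasurableSpace Ω]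
    (P : MTProblem N d Ω) : IsProbabilityMeasure P.μ :=
  P.prob

namespace MTProblem

variable {N d : ℕ} {Ω : Type} [MeasurableSpace Ω] (P : MTProblem N d Ω)

local notation "V" => EuclideanSpace ℝ (Fin d)

theorem lipschitzWith_g (i : Fin N) : LipschitzWith (Real.toNNReal P.L) (P.g i) :=
  LipschitzWith.of_dist_le_mul fun v w => by
    simpa [dist_eq_norm, Real.coe_toNNReal _ P.hL.le] using P.hsmooth i v w

theorem norm_gradF_sub_le (v w : V) : ‖P.gradF v - P.gradF w‖ ≤ P.L * ‖v - w‖ := by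
  have hN : (0 : ℝ) < N := Nat.cast_pos.2 P.hN
  calc ‖P.gradF v - P.gradF w‖ = (N : ℝ)⁻¹ * ‖∑ i, (P.g i v - P.g i w)‖ := by
        rw [gradF, gradF, ← smul_sub, ← sum_sub_distrib, norm_smul, norm_inv, Real.norm_natCast]
    _ ≤ (N : ℝ)⁻¹ * ∑ _i : Fin N, P.L * ‖v - w‖ := by
        gcongr
        exact (norm_sum_le _ _).trans (sum_le_sum fun i _ => P.hsmooth i v w)
    _ = P.L * ‖v - w‖ := by
        rw [sum_const, card_univ, Fintype.card_fin, nsmul_eq_mul]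
        field_simp

theorem lipschitzWith_gradF : LipschitzWith (Real.toNNReal P.L) P.gradF :=
  LipschitzWith.of_dist_le_mul fun v w => by
    simpa [dist_eq_norm, Real.coe_toNNReal _ P.hL.le] using P.norm_gradF_sub_le v w

theorem norm_avg_g_sq_le (x : Fin N → V) (y : V) :
    ‖(N : ℝ)⁻¹ • ∑ i, P.g i (x i)‖ ^ 2
      ≤ 2 * ‖P.gradF y‖ ^ 2 + 2 * P.L ^ 2 * ((N : ℝ)⁻¹ * ∑ i, ‖x i - y‖ ^ 2) := by
  have hsplit : (N : ℝ)⁻¹ • ∑ i, P.g i (x i)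
      = P.gradF y + (N : ℝ)⁻¹ • ∑ i, (P.g i (x i) - P.g i y) := by
    rw [gradF, sum_sub_distrib, smul_sub, add_sub_cancel]
  have hlip : (N : ℝ)⁻¹ * ∑ i, ‖P.g i (x i) - P.g i y‖ ^ 2
      ≤ P.L ^ 2 * ((N : ℝ)⁻¹ * ∑ i, ‖x i - y‖ ^ 2) := by
    calc (N : ℝ)⁻¹ * ∑ i, ‖P.g i (x i) - P.g i y‖ ^ 2
        ≤ (N : ℝ)⁻¹ * ∑ i, P.L ^ 2 * ‖x i - y‖ ^ 2 := by
          gcongr with i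
          simpa [mul_pow] using pow_le_pow_left₀ (norm_nonneg _) (P.hsmooth i (x i) y) 2
      _ = P.L ^ 2 * ((N : ℝ)⁻¹ * ∑ i, ‖x i - y‖ ^ 2) := by rw [← mul_sum]; ring
  rw [hsplit]
  linarith [norm_add_sq_le_two_mul (P.gradF y) ((N : ℝ)⁻¹ • ∑ i, (P.g i (x i) - P.g i y)),
    norm_avg_sq_le fun i => P.g i (x i) - P.g i y]

variable {E : Type*} [AddCommGroup E] [Module ℝ E]

theorem sum_mix_const (i : Fin N) (v : E) : ∑ j, P.W i j • v = v := by
  rw [← sum_smul, P.hWrow i, one_smul]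

theorem sum_mix (v : Fin N → E) : ∑ i, ∑ j, P.W i j • v j = ∑ j, v j := by
  rw [sum_comm]
  exact sum_congr rfl fun j _ => by rw [← sum_smul, P.hWcol j, one_smul]

theorem sum_norm_mix_sub_avg_sq_le (v : Fin N → V) :
    ∑ i, ‖∑ j, P.W i j • v j - (N : ℝ)⁻¹ • ∑ j, v j‖ ^ 2
      ≤ (1 - P.p) * ∑ i, ‖v i - (N : ℝ)⁻¹ • ∑ j, v j‖ ^ 2 := by
  simpa only [P.hWsymm] using P.hmix v

theorem sum_norm_mix_sq_le_of_sum_eq_zero (v : Fin N → V) (hv : ∑ i, v i = 0) :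
    ∑ i, ‖∑ j, P.W i j • v j‖ ^ 2 ≤ (1 - P.p) * ∑ i, ‖v i‖ ^ 2 := by
  simpa [hv] using P.sum_norm_mix_sub_avg_sq_le v

theorem sum_norm_sub_mix_sq_le (v : Fin N → V) :
    ∑ i, ‖v i - ∑ j, P.W i j • v j‖ ^ 2 ≤ 4 * ∑ i, ‖v i‖ ^ 2 := by
  set m := (N : ℝ)⁻¹ • ∑ j, v j
  have hsplit := sum_norm_add_sq_le_two_mul univ (fun i => v i - m)
    (fun i => -(∑ j, P.W i j • v j - m))
  simp only [← sub_eq_add_neg, sub_sub_sub_cancel_right, norm_neg] at hsplit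
  have hmix := P.sum_norm_mix_sub_avg_sq_le v
  have hcenter := sum_norm_sub_avg_sq_le v
  have hp := P.hp0
  have hnn : 0 ≤ ∑ i, ‖v i - m‖ ^ 2 := sum_nonneg fun i _ => sq_nonneg _
  nlinarith

theorem sum_norm_mix_add_sub_sq_le (A Δ s : Fin N → V) (hA : ∑ i, A i = 0) :
    ∑ i, ‖∑ j, P.W i j • A j + Δ i - (s i - ∑ j, P.W i j • s j)‖ ^ 2
      ≤ (1 - P.p / 2) * ∑ i, ‖A i‖ ^ 2 + 6 / P.p * ∑ i, ‖Δ i‖ ^ 2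
        + 24 / P.p * ∑ i, ‖s i‖ ^ 2 := by
  have hp0 := P.hp0
  have hp1 := P.hp1
  have hyoung := sum_norm_add_sq_le_young univ (fun i => ∑ j, P.W i j • A j)
    (fun i => Δ i - (s i - ∑ j, P.W i j • s j)) (half_pos hp0)
  simp only [← add_sub_assoc, inv_div] at hyoung
  have hA' := P.sum_norm_mix_sq_le_of_sum_eq_zero A hA
  have hrest : ∑ i, ‖Δ i - (s i - ∑ j, P.W i j • s j)‖ ^ 2
      ≤ 2 * ∑ i, ‖Δ i‖ ^ 2 + 8 * ∑ i, ‖s i‖ ^ 2 := by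
    have := sum_norm_add_sq_le_two_mul univ Δ fun i => -(s i - ∑ j, P.W i j • s j)
    simp only [norm_neg, ← sub_eq_add_neg] at this
    linarith [P.sum_norm_sub_mix_sq_le s]
  have hcoef : 1 + 2 / P.p ≤ 3 / P.p := by
    rw [le_div_iff₀ hp0, add_mul, div_mul_cancel₀ _ hp0.ne']
    linarith
  calc _ ≤ (1 + P.p / 2) * ((1 - P.p) * ∑ i, ‖A i‖ ^ 2)
        + 3 / P.p * (2 * ∑ i, ‖Δ i‖ ^ 2 + 8 * ∑ i, ‖s i‖ ^ 2) := by
        refine hyoung.trans (add_le_add (by gcongr) ?_)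
        exact mul_le_mul hcoef hrest (sum_nonneg fun i _ => sq_nonneg _) (by positivity)
    _ ≤ _ := by
        have hSA : 0 ≤ ∑ i, ‖A i‖ ^ 2 := sum_nonneg fun i _ => sq_nonneg _
        have : (1 + P.p / 2) * (1 - P.p) ≤ 1 - P.p / 2 := by nlinarith
        have := mul_le_mul_of_nonneg_right this hSA
        field_simp
        nlinarith

end MTProblem

namespace MTRun

variable {N d : ℕ} {Ω : Type} [MeasurableSpace Ω] {P : MTProblem N d Ω} (S : MTRun P)

def trackingError (r : ℕ) (i : Fin N) (ω : Ω) : EuclideanSpace ℝ (Fin d) :=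
  S.dseq (r + 1) i ω - S.c r i ω - S.eseq (r + 1) i ω

def momentumDrift (r : ℕ) (i : Fin N) (ω : Ω) : EuclideanSpace ℝ (Fin d) :=
  S.dseq (r + 1) i ω - S.dseq r i ω - S.eseq (r + 1) i ω + S.eseq r i ω

def gradNoise (r : ℕ) (i : Fin N) (ω : Ω) : EuclideanSpace ℝ (Fin d) :=
  S.G r i ω - P.g i (S.x r i ω)

/-- The `ℱ_r`-measurable part of `ū^{(r+1)}`. -/
def predMomentum (r : ℕ) (ω : Ω) : EuclideanSpace ℝ (Fin d) :=
  P.β • S.ubar r ω + (N : ℝ)⁻¹ • ∑ i, P.g i (S.x r i ω)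

theorem EE_eq (r : ℕ) :
    S.EE r = (N : ℝ)⁻¹ * ∫ ω, ∑ i, ‖S.trackingError r i ω‖ ^ 2 ∂P.μ := rfl

theorem DD_eq (r : ℕ) :
    S.DD r = (N : ℝ)⁻¹ * ∫ ω, ∑ i, ‖S.momentumDrift r i ω‖ ^ 2 ∂P.μ := rfl

theorem eseq_apply_eq (r : ℕ) (i j : Fin N) (ω : Ω) : S.eseq r i ω = S.eseq r j ω := by
  induction r with
  | zero => rfl
  | succ r ih => simp only [eseq, ih]

theorem sum_dseq_eq_sum_eseq (r : ℕ) (ω : Ω) : ∑ i, S.dseq r i ω = ∑ i, S.eseq r i ω := by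
  have hgradF : ∀ v, ∑ _i : Fin N, P.gradF v = ∑ i, P.g i v := fun v =>
    sum_const_inv_card_smul P.hN.ne' _
  induction r with
  | zero => simp [dseq, eseq, ← smul_sum, hgradF]
  | succ r ih => simp only [dseq, eseq, sum_add_distrib, ← smul_sum, ih, hgradF]

theorem sum_c_eq_zero (r : ℕ) (ω : Ω) : ∑ i, S.c r i ω = 0 := by
  induction r with
  | zero =>
    simp only [S.hc0, S.hu0]
    rw [← smul_sum, sum_sub_distrib, sum_const_inv_card_smul P.hN.ne', sub_self, smul_zero]
  | succ r ih =>
    simp only [S.hc, sum_add_distrib, P.sum_mix, sum_sub_distrib, ih]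
    abel

theorem sum_trackingError_eq_zero (r : ℕ) (ω : Ω) : ∑ i, S.trackingError r i ω = 0 := by
  simp only [trackingError, sum_sub_distrib, sum_dseq_eq_sum_eseq, sum_c_eq_zero]
  abel

theorem ubar_zero (ω : Ω) : S.ubar 0 ω = 0 := by
  have h := S.sum_c_eq_zero 0 ω
  simp only [S.hc0] at h
  rw [ubar, h, smul_zero]

theorem xbar_succ (r : ℕ) (ω : Ω) :
    S.xbar (r + 1) ω = S.xbar r ω - S.η • S.ubar (r + 1) ω := by
  simp only [xbar, ubar, S.hx, sum_sub_distrib, P.sum_mix, ← smul_sum, S.sum_c_eq_zero, smul_zero,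
    sub_zero, smul_sub, smul_comm S.η]

theorem ubar_succ (r : ℕ) (ω : Ω) :
    S.ubar (r + 1) ω = P.β • S.ubar r ω + (N : ℝ)⁻¹ • ∑ i, S.G r i ω := by
  simp only [ubar, S.hu, sum_add_distrib, smul_add, ← smul_sum, smul_comm P.β]

theorem ubar_succ_eq_predMomentum_add (r : ℕ) (ω : Ω) :
    S.ubar (r + 1) ω = S.predMomentum r ω + (N : ℝ)⁻¹ • ∑ i, S.gradNoise r i ω := by
  rw [ubar_succ, predMomentum, add_assoc, ← smul_add, ← sum_add_distrib]
  simp [gradNoise]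

theorem trackingError_succ (r : ℕ) (i : Fin N) (ω : Ω) :
    S.trackingError (r + 1) i ω
      = ∑ j, P.W i j • S.trackingError r j ω + S.momentumDrift (r + 1) i ω
        - ((S.u (r + 1) i ω - S.dseq (r + 1) i ω)
          - ∑ j, P.W i j • (S.u (r + 1) j ω - S.dseq (r + 1) j ω)) := by
  have he : ∑ j, P.W i j • S.eseq (r + 1) j ω = S.eseq (r + 1) i ω := by
    simp only [S.eseq_apply_eq (r + 1) _ i, P.sum_mix_const]
  simp only [trackingError, momentumDrift, S.hc, smul_sub, sum_sub_distrib, he]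
  abel

theorem momentumDrift_succ (r : ℕ) (i : Fin N) (ω : Ω) :
    S.momentumDrift (r + 1) i ω
      = P.β • S.momentumDrift r i ω + (P.g i (S.xbar (r + 1) ω) - P.g i (S.xbar r ω))
        - (P.gradF (S.xbar (r + 1) ω) - P.gradF (S.xbar r ω)) := by
  simp only [momentumDrift, dseq, eseq]
  module

theorem sum_norm_momentumDrift_succ_sq_le (r : ℕ) (ω : Ω) :
    ∑ i, ‖S.momentumDrift (r + 1) i ω‖ ^ 2
      ≤ 3 * P.β ^ 2 * ∑ i, ‖S.momentumDrift r i ω‖ ^ 2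
        + 6 * N * P.L ^ 2 * ‖S.xbar (r + 1) ω - S.xbar r ω‖ ^ 2 := by
  set X := ‖S.xbar (r + 1) ω - S.xbar r ω‖ ^ 2
  have hterm : ∀ i, ‖S.momentumDrift (r + 1) i ω‖ ^ 2
      ≤ 3 * P.β ^ 2 * ‖S.momentumDrift r i ω‖ ^ 2 + 6 * P.L ^ 2 * X := by
    intro i
    have h3 := norm_add₃_sq_le (P.β • S.momentumDrift r i ω)
      (P.g i (S.xbar (r + 1) ω) - P.g i (S.xbar r ω))
      (-(P.gradF (S.xbar (r + 1) ω) - P.gradF (S.xbar r ω)))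
    have hg := pow_le_pow_left₀ (norm_nonneg _) (P.hsmooth i (S.xbar (r + 1) ω) (S.xbar r ω)) 2
    have hf := pow_le_pow_left₀ (norm_nonneg _) (P.norm_gradF_sub_le (S.xbar (r + 1) ω)
      (S.xbar r ω)) 2
    rw [← sub_eq_add_neg, ← momentumDrift_succ, norm_neg, norm_smul, mul_pow, Real.norm_eq_abs,
      sq_abs] at h3
    rw [mul_pow] at hg hf
    linarith
  calc _ ≤ ∑ i, (3 * P.β ^ 2 * ‖S.momentumDrift r i ω‖ ^ 2 + 6 * P.L ^ 2 * X) :=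
        sum_le_sum fun i _ => hterm i
    _ = _ := by
        rw [sum_add_distrib, ← mul_sum, sum_const, card_univ, Fintype.card_fin, nsmul_eq_mul]
        ring

theorem sum_norm_trackingError_succ_sq_le (r : ℕ) (ω : Ω) :
    ∑ i, ‖S.trackingError (r + 1) i ω‖ ^ 2
      ≤ (1 - P.p / 2) * ∑ i, ‖S.trackingError r i ω‖ ^ 2
        + 18 * P.β ^ 2 / P.p * ∑ i, ‖S.momentumDrift r i ω‖ ^ 2
        + 24 / P.p * ∑ i, ‖S.u (r + 1) i ω - S.dseq (r + 1) i ω‖ ^ 2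
        + 36 * N * P.L ^ 2 / P.p * ‖S.xbar (r + 1) ω - S.xbar r ω‖ ^ 2 := by
  simp only [trackingError_succ]
  have hmix := P.sum_norm_mix_add_sub_sq_le (S.trackingError r · ω)
    (S.momentumDrift (r + 1) · ω) (fun i => S.u (r + 1) i ω - S.dseq (r + 1) i ω)
    (S.sum_trackingError_eq_zero r ω)
  have hdrift : 6 / P.p * ∑ i, ‖S.momentumDrift (r + 1) i ω‖ ^ 2
      ≤ 18 * P.β ^ 2 / P.p * ∑ i, ‖S.momentumDrift r i ω‖ ^ 2
        + 36 * N * P.L ^ 2 / P.p * ‖S.xbar (r + 1) ω - S.xbar r ω‖ ^ 2 := by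
    refine (mul_le_mul_of_nonneg_left (S.sum_norm_momentumDrift_succ_sq_le r ω)
      (div_nonneg (by norm_num : (0 : ℝ) ≤ 6) P.hp0.le)).trans_eq ?_
    ring
  linarith

theorem memLp_u (r : ℕ) (i : Fin N) : MemLp (S.u r i) 2 P.μ := by
  induction r generalizing i with
  | zero =>
    rw [funext (S.hu0 i)]
    exact ((S.hmeas 0 i).sub
      ((memLp_finsetSum univ fun j _ => S.hmeas 0 j).const_smul (_ : ℝ))).const_smul (_ : ℝ)
  | succ r ih =>
    rw [funext (S.hu r i)]
    exact ((ih i).const_smul (_ : ℝ)).add (S.hmeas r i)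

theorem memLp_c (r : ℕ) (i : Fin N) : MemLp (S.c r i) 2 P.μ := by
  induction r generalizing i with
  | zero => rw [S.hc0]; exact S.memLp_u 0 i
  | succ r ih =>
    rw [funext (S.hc r i)]
    exact (memLp_finsetSum univ fun j _ => ((ih j).sub (S.memLp_u _ j)).const_smul (_ : ℝ)).add
      (S.memLp_u _ i)

theorem memLp_x (r : ℕ) (i : Fin N) : MemLp (S.x r i) 2 P.μ := by
  induction r generalizing i with
  | zero => rw [S.hx0]; exact memLp_const _
  | succ r ih =>
    rw [funext (S.hx r i)]
    exact (memLp_finsetSum univ fun j _ => (ih j).const_smul (_ : ℝ)).sub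
      (((S.memLp_u _ i).sub (S.memLp_c r i)).const_smul (_ : ℝ))

theorem memLp_xbar (r : ℕ) : MemLp (S.xbar r) 2 P.μ :=
  (memLp_finsetSum univ fun i _ => S.memLp_x r i).const_smul (_ : ℝ)

theorem memLp_ubar (r : ℕ) : MemLp (S.ubar r) 2 P.μ :=
  (memLp_finsetSum univ fun i _ => S.memLp_u r i).const_smul (_ : ℝ)

theorem memLp_g_xbar (r : ℕ) (i : Fin N) : MemLp (fun ω => P.g i (S.xbar r ω)) 2 P.μ :=
  (P.lipschitzWith_g i).memLp_comp (S.memLp_xbar r)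

theorem memLp_gradF_xbar (r : ℕ) : MemLp (fun ω => P.gradF (S.xbar r ω)) 2 P.μ :=
  P.lipschitzWith_gradF.memLp_comp (S.memLp_xbar r)

theorem memLp_dseq (r : ℕ) (i : Fin N) : MemLp (S.dseq r i) 2 P.μ := by
  induction r generalizing i with
  | zero => exact ((S.memLp_g_xbar 0 i).sub (S.memLp_gradF_xbar 0)).const_smul (_ : ℝ)
  | succ r ih => exact ((ih i).const_smul (_ : ℝ)).add (S.memLp_g_xbar r i)

theorem memLp_eseq (r : ℕ) (i : Fin N) : MemLp (S.eseq r i) 2 P.μ := by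
  induction r generalizing i with
  | zero => exact memLp_const 0
  | succ r ih => exact ((ih i).const_smul (_ : ℝ)).add (S.memLp_gradF_xbar r)

theorem memLp_gradNoise (r : ℕ) (i : Fin N) : MemLp (S.gradNoise r i) 2 P.μ :=
  (S.hmeas r i).sub ((P.lipschitzWith_g i).memLp_comp (S.memLp_x r i))

theorem stronglyMeasurable_u_succ (r : ℕ) (i : Fin N) :
    StronglyMeasurable[S.ℱ (r + 1)] (S.u (r + 1) i) := by
  induction r generalizing i with
  | zero =>
    rw [funext (S.hu 0 i), funext (S.hu0 i)]
    exact ((((S.hadapted_G 0 i).sub ((Finset.stronglyMeasurable_fun_sum univ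
      fun j _ => S.hadapted_G 0 j).const_smul (_ : ℝ))).const_smul (_ : ℝ)).const_smul
      (_ : ℝ)).add (S.hadapted_G 0 i)
  | succ r ih =>
    rw [funext (S.hu (r + 1) i)]
    exact (((ih i).mono (S.ℱ.mono (r + 1).le_succ)).const_smul (_ : ℝ)).add
      (S.hadapted_G (r + 1) i)

theorem stronglyMeasurable_ubar (r : ℕ) : StronglyMeasurable[S.ℱ r] (S.ubar r) := by
  cases r with
  | zero => rw [funext S.ubar_zero]; exact stronglyMeasurable_const
  | succ r =>
    exact (Finset.stronglyMeasurable_fun_sum univ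
      fun i _ => S.stronglyMeasurable_u_succ r i).const_smul (_ : ℝ)

theorem condExp_gradNoise (r : ℕ) (i : Fin N) : P.μ[S.gradNoise r i | S.ℱ r] =ᵐ[P.μ] 0 := by
  have hgx : Integrable (fun ω => P.g i (S.x r i ω)) P.μ :=
    ((P.lipschitzWith_g i).memLp_comp (S.memLp_x r i)).integrable one_le_two
  have hgx_meas : StronglyMeasurable[S.ℱ r] fun ω => P.g i (S.x r i ω) :=
    (P.lipschitzWith_g i).continuous.comp_stronglyMeasurable (S.hadapted_x r i)
  filter_upwards [condExp_sub ((S.hmeas r i).integrable one_le_two) hgx (S.ℱ r),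
    S.hunbiased r i] with ω hsub hG
  change P.μ[S.G r i - fun ω => P.g i (S.x r i ω) | S.ℱ r] ω = 0
  rw [hsub, Pi.sub_apply, hG, condExp_of_stronglyMeasurable (S.ℱ.le r) hgx_meas hgx, sub_self]

theorem condExp_avg_gradNoise (r : ℕ) :
    P.μ[fun ω => (N : ℝ)⁻¹ • ∑ i, S.gradNoise r i ω | S.ℱ r] =ᵐ[P.μ] 0 := by
  have hfun : (fun ω => (N : ℝ)⁻¹ • ∑ i, S.gradNoise r i ω)
      = (N : ℝ)⁻¹ • ∑ i, S.gradNoise r i := by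
    funext ω
    simp [Finset.sum_apply]
  rw [hfun]
  filter_upwards [condExp_smul (N : ℝ)⁻¹ (∑ i, S.gradNoise r i) (S.ℱ r),
    condExp_finsetSum (s := univ) (fun i _ => (S.memLp_gradNoise r i).integrable one_le_two)
      (S.ℱ r), ae_all_iff.2 fun i => S.condExp_gradNoise r i] with ω hsmul hsum hzero
  rw [hsmul, Pi.smul_apply, hsum, Finset.sum_apply]
  simp [hzero]

theorem integral_norm_avg_gradNoise_sq_le (r : ℕ) :
    ∫ ω, ‖(N : ℝ)⁻¹ • ∑ i, S.gradNoise r i ω‖ ^ 2 ∂P.μ ≤ P.σ ^ 2 / N := by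
  have hpyth := integral_norm_sum_sq_of_orthogonal univ (fun i _ => S.memLp_gradNoise r i)
    fun i _ j _ hij => S.horth r r i j (by simpa using hij)
  simp_rw [norm_smul, mul_pow]
  rw [integral_const_mul, hpyth, norm_inv, Real.norm_natCast]
  calc ((N : ℝ)⁻¹) ^ 2 * ∑ i, ∫ ω, ‖S.gradNoise r i ω‖ ^ 2 ∂P.μ
      ≤ ((N : ℝ)⁻¹) ^ 2 * ∑ _i : Fin N, P.σ ^ 2 := by gcongr with i; exact S.hvar r i
    _ = P.σ ^ 2 / N := by
      rw [sum_const, card_univ, Fintype.card_fin, nsmul_eq_mul]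
      field_simp

theorem stronglyMeasurable_predMomentum (r : ℕ) : StronglyMeasurable[S.ℱ r] (S.predMomentum r) :=
  ((S.stronglyMeasurable_ubar r).const_smul (_ : ℝ)).add ((Finset.stronglyMeasurable_fun_sum
    univ fun i _ => (P.lipschitzWith_g i).continuous.comp_stronglyMeasurable
      (S.hadapted_x r i)).const_smul (_ : ℝ))

theorem memLp_predMomentum (r : ℕ) : MemLp (S.predMomentum r) 2 P.μ :=
  ((S.memLp_ubar r).const_smul (_ : ℝ)).add ((memLp_finsetSum univ
    fun i _ => (P.lipschitzWith_g i).memLp_comp (S.memLp_x r i)).const_smul (_ : ℝ))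

theorem integral_norm_predMomentum_sq_le (r : ℕ) :
    ∫ ω, ‖S.predMomentum r ω‖ ^ 2 ∂P.μ
      ≤ 2 * P.β ^ 2 * ∫ ω, ‖S.ubar r ω‖ ^ 2 ∂P.μ + 4 * ∫ ω, ‖P.gradF (S.xbar r ω)‖ ^ 2 ∂P.μ
        + 4 * P.L ^ 2 * S.Xi r := by
  have hpoint : ∀ ω, ‖S.predMomentum r ω‖ ^ 2 ≤ 2 * P.β ^ 2 * ‖S.ubar r ω‖ ^ 2
      + 4 * ‖P.gradF (S.xbar r ω)‖ ^ 2
      + 4 * P.L ^ 2 * ((N : ℝ)⁻¹ * ∑ i, ‖S.x r i ω - S.xbar r ω‖ ^ 2) := fun ω => by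
    have h1 := norm_add_sq_le_two_mul (P.β • S.ubar r ω) ((N : ℝ)⁻¹ • ∑ i, P.g i (S.x r i ω))
    have h2 := P.norm_avg_g_sq_le (S.x r · ω) (S.xbar r ω)
    rw [norm_smul, mul_pow, Real.norm_eq_abs, sq_abs] at h1
    rw [predMomentum]
    linarith
  have hU := (S.memLp_ubar r).integrable_norm_sq
  have hF := (S.memLp_gradF_xbar r).integrable_norm_sq
  have hX : Integrable (fun ω => ∑ i, ‖S.x r i ω - S.xbar r ω‖ ^ 2) P.μ :=
    integrable_finsetSum _ fun i _ => ((S.memLp_x r i).sub (S.memLp_xbar r)).integrable_norm_sq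
  have hint := integral_mono_of_nonneg (ae_of_all _ fun ω => by positivity) (by fun_prop)
    (ae_of_all _ hpoint)
  simp (disch := fun_prop) only [integral_add, integral_const_mul] at hint
  rwa [Xi]

theorem integral_norm_ubar_succ_sq_le (r : ℕ) :
    ∫ ω, ‖S.ubar (r + 1) ω‖ ^ 2 ∂P.μ
      ≤ 2 * P.β ^ 2 * ∫ ω, ‖S.ubar r ω‖ ^ 2 ∂P.μ + 4 * ∫ ω, ‖P.gradF (S.xbar r ω)‖ ^ 2 ∂P.μ
        + 4 * P.L ^ 2 * S.Xi r + P.σ ^ 2 / N := by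
  have hnoise : MemLp (fun ω => (N : ℝ)⁻¹ • ∑ i, S.gradNoise r i ω) 2 P.μ :=
    (memLp_finsetSum univ fun i _ => S.memLp_gradNoise r i).const_smul (_ : ℝ)
  simp_rw [ubar_succ_eq_predMomentum_add]
  rw [integral_norm_add_sq_of_condExp_eq_zero (S.ℱ.le r) (S.stronglyMeasurable_predMomentum r)
    (S.memLp_predMomentum r) hnoise (S.condExp_avg_gradNoise r)]
  linarith [S.integral_norm_predMomentum_sq_le r, S.integral_norm_avg_gradNoise_sq_le r]

theorem integral_norm_xbar_succ_sub_sq (r : ℕ) :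
    ∫ ω, ‖S.xbar (r + 1) ω - S.xbar r ω‖ ^ 2 ∂P.μ
      = S.η ^ 2 * ∫ ω, ‖S.ubar (r + 1) ω‖ ^ 2 ∂P.μ := by
  simp_rw [xbar_succ, sub_sub_cancel_left, norm_neg, norm_smul, mul_pow, Real.norm_eq_abs, sq_abs]
  exact integral_const_mul _ _

theorem EE_succ_le (r : ℕ) :
    S.EE (r + 1) ≤ (1 - P.p / 2) * S.EE r + 18 * P.β ^ 2 / P.p * S.DD r
      + 24 / (N * P.p) * ∫ ω, ∑ i, ‖S.u (r + 1) i ω - S.dseq (r + 1) i ω‖ ^ 2 ∂P.μ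
      + 36 * P.L ^ 2 / P.p * ∫ ω, ‖S.xbar (r + 1) ω - S.xbar r ω‖ ^ 2 ∂P.μ := by
  have hA : Integrable (fun ω => ∑ i, ‖S.trackingError r i ω‖ ^ 2) P.μ :=
    integrable_finsetSum _ fun i _ => (((S.memLp_dseq _ i).sub (S.memLp_c r i)).sub
      (S.memLp_eseq _ i)).integrable_norm_sq
  have hD : Integrable (fun ω => ∑ i, ‖S.momentumDrift r i ω‖ ^ 2) P.μ :=
    integrable_finsetSum _ fun i _ => ((((S.memLp_dseq _ i).sub (S.memLp_dseq r i)).sub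
      (S.memLp_eseq _ i)).add (S.memLp_eseq r i)).integrable_norm_sq
  have hs : Integrable (fun ω => ∑ i, ‖S.u (r + 1) i ω - S.dseq (r + 1) i ω‖ ^ 2) P.μ :=
    integrable_finsetSum _ fun i _ => ((S.memLp_u _ i).sub (S.memLp_dseq _ i)).integrable_norm_sq
  have hX : Integrable (fun ω => ‖S.xbar (r + 1) ω - S.xbar r ω‖ ^ 2) P.μ :=
    ((S.memLp_xbar (r + 1)).sub (S.memLp_xbar r)).integrable_norm_sq
  have hint := integral_mono_of_nonneg (ae_of_all _ fun ω => by positivity) (by fun_prop)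
    (ae_of_all _ (S.sum_norm_trackingError_succ_sq_le r))
  simp (disch := fun_prop) only [integral_add, integral_const_mul] at hint
  have hN : (0 : ℝ) < N := Nat.cast_pos.2 P.hN
  rw [EE_eq, EE_eq, DD_eq]
  refine (mul_le_mul_of_nonneg_left hint (inv_nonneg.2 hN.le)).trans_eq ?_
  field_simp

end MTRun

/-- **Lemma** (recursion for the tracking error `ℰ`): for every round `r ≥ 0`,
`ℰ^{(r+1)} ≤ (1 − p/2) ℰ^{(r)} + (18β²/p) 𝒟^{(r)} + (24/(Np)) E‖U^{(r+1)} − D^{(r+1)}‖_F²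
  + (144L⁴/p)η² Ξ^{(r)} + (72β²L²/p)η² E‖ū^{(r)}‖² + (144L²/p)η² E‖∇f(x̄^{(r)})‖²
  + 36L²σ²η²/(Np)`. -/
theorem tracking_error_recursion
    (N d : ℕ) (Ω : Type) [mΩ : MeasurableSpace Ω]
    (P : MTProblem N d Ω) (S : MTRun P) :
    ∀ r : ℕ,
      S.EE (r + 1) ≤
        (1 - P.p / 2) * S.EE r
          + 18 * P.β ^ 2 / P.p * S.DD r
          + 24 / ((N : ℝ) * P.p) *
              ∫ ω, (∑ i, ‖S.u (r + 1) i ω - S.dseq (r + 1) i ω‖ ^ 2) ∂P.μ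
          + 144 * P.L ^ 4 / P.p * S.η ^ 2 * S.Xi r
          + 72 * P.β ^ 2 * P.L ^ 2 / P.p * S.η ^ 2 * ∫ ω, ‖S.ubar r ω‖ ^ 2 ∂P.μ
          + 144 * P.L ^ 2 / P.p * S.η ^ 2 * ∫ ω, ‖P.gradF (S.xbar r ω)‖ ^ 2 ∂P.μ
          + 36 * P.L ^ 2 * P.σ ^ 2 * S.η ^ 2 / ((N : ℝ) * P.p) := by
  intro r
  have hstep := S.EE_succ_le r
  rw [S.integral_norm_xbar_succ_sub_sq r] at hstep
  have hp := P.hp0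
  have hubar := mul_le_mul_of_nonneg_left (S.integral_norm_ubar_succ_sq_le r)
    (by positivity : 0 ≤ 36 * P.L ^ 2 / P.p * S.η ^ 2)
  have hN : (N : ℝ) ≠ 0 := Nat.cast_ne_zero.2 P.hN.ne'
  have hexpand : 36 * P.L ^ 2 / P.p * S.η ^ 2 * (2 * P.β ^ 2 * ∫ ω, ‖S.ubar r ω‖ ^ 2 ∂P.μ
      + 4 * ∫ ω, ‖P.gradF (S.xbar r ω)‖ ^ 2 ∂P.μ + 4 * P.L ^ 2 * S.Xi r + P.σ ^ 2 / N)
      = 144 * P.L ^ 4 / P.p * S.η ^ 2 * S.Xi r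
        + 72 * P.β ^ 2 * P.L ^ 2 / P.p * S.η ^ 2 * ∫ ω, ‖S.ubar r ω‖ ^ 2 ∂P.μ
        + 144 * P.L ^ 2 / P.p * S.η ^ 2 * ∫ ω, ‖P.gradF (S.xbar r ω)‖ ^ 2 ∂P.μ
        + 36 * P.L ^ 2 * P.σ ^ 2 * S.η ^ 2 / ((N : ℝ) * P.p) := by
    field_simp
    ring
  linarith
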